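/- Let n be a positive integer and 0 < α < n+1. Set Q_α(z,w) = ρ(z,w)^{−α} for z, w ∈ U. Then for every w ∈ U, ‖Q_α(·, w)‖_{L^{(n+1)/α,∞}(U)} ≤ (2^{n+1} π^n / (n−1)!)^{α/(n+1)}, and symmetrically for every z ∈ U, ‖Q_α(z, ·)‖_{L^{(n+1)/α,∞}(U)} ≤ (2^{n+1} π^n / (n−1)!)^{α/(n+1)}. -/

import Mathlib

open MeasureTheory Complex Real ENNReal

noncomputable section

/-- We model `ℂ^n` (with `n ≥ 1`) as `ℂ^{n-1} × ℂ`, writing `z = (z', z_n)`. -/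
abbrev SiegelSpace (n : ℕ) := (Fin (n - 1) → ℂ) × ℂ

/-- The Siegel upper half-space `U = {z : Im z_n > |z'|²}`. -/
def siegelDomain (n : ℕ) : Set (SiegelSpace n) :=
  {z | ∑ k, ‖z.1 k‖ ^ 2 < z.2.im}

/-- `ρ(z,w) = (i/2)(conj w_n − z_n) − ⟨z', w'⟩`. -/
def siegelRho (n : ℕ) (z w : SiegelSpace n) : ℂ :=
  Complex.I / 2 * ((starRingEnd ℂ) w.2 - z.2) - ∑ k, z.1 k * (starRingEnd ℂ) (w.1 k)

/-- `ρ(w) = ρ(w,w) = Im w_n − |w'|²`, as a real number. -/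
def siegelRhoSelf (n : ℕ) (w : SiegelSpace n) : ℝ :=
  w.2.im - ∑ k, ‖w.1 k‖ ^ 2

/-- Lebesgue measure restricted to the Siegel upper half-space. -/
def siegelMeasure (n : ℕ) : Measure (SiegelSpace n) := volume.restrict (siegelDomain n)

/-- The Bergman-type operator `T_α f(z) = ∫_U f(w) ρ(z,w)^{-α} dV(w)`. -/
def Talpha (n : ℕ) (α : ℝ) (f : SiegelSpace n → ℂ) (z : SiegelSpace n) : ℂ :=
  ∫ w in siegelDomain n, f w / siegelRho n z w ^ (α : ℂ)

/-- `T_α` is bounded from `L^p(U)` to `L^q(U)`: there is `C > 0` such that for every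
`f ∈ L^p(U)` the defining integral converges absolutely for a.e. `z ∈ U` and
`‖T_α f‖_q ≤ C ‖f‖_p`. -/
def TalphaBounded (n : ℕ) (α : ℝ) (p q : ℝ≥0∞) : Prop :=
  ∃ C : ℝ, 0 < C ∧ ∀ f : SiegelSpace n → ℂ, MemLp f p (siegelMeasure n) →
    (∀ᵐ z ∂(siegelMeasure n),
      IntegrableOn (fun w => f w / siegelRho n z w ^ (α : ℂ)) (siegelDomain n)) ∧
    eLpNorm (Talpha n α f) q (siegelMeasure n) ≤
      ENNReal.ofReal C * eLpNorm f p (siegelMeasure n)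

/-- The operator `S_α f(z) = ∫_U f(w) |ρ(z,w)|^{-α} dV(w)`. -/
def Salpha (n : ℕ) (α : ℝ) (f : SiegelSpace n → ℂ) (z : SiegelSpace n) : ℂ :=
  ∫ w in siegelDomain n, f w / ((‖siegelRho n z w‖ ^ α : ℝ) : ℂ)

/-- `S_α` is bounded from `L^p(U)` to `L^q(U)`. -/
def SalphaBounded (n : ℕ) (α : ℝ) (p q : ℝ≥0∞) : Prop :=
  ∃ C : ℝ, 0 < C ∧ ∀ f : SiegelSpace n → ℂ, MemLp f p (siegelMeasure n) →
    (∀ᵐ z ∂(siegelMeasure n),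
      IntegrableOn (fun w => f w / ((‖siegelRho n z w‖ ^ α : ℝ) : ℂ))
        (siegelDomain n)) ∧
    eLpNorm (Salpha n α f) q (siegelMeasure n) ≤
      ENNReal.ofReal C * eLpNorm f p (siegelMeasure n)

/-- The point `𝐢 = (0', i) ∈ U`. -/
def siegelPt (n : ℕ) : SiegelSpace n := (0, Complex.I)

/-- The dilation `t ∘ z = (t z', t² z_n)`. -/
def dilate (n : ℕ) (t : ℝ) (z : SiegelSpace n) : SiegelSpace n :=
  (fun k => t * z.1 k, t ^ 2 * z.2)

/-- The weak-`L^r` quasinorm `‖f‖_{L^{r,∞}(U)} = sup_{λ>0} λ |{z ∈ U : |f z| > λ}|^{1/r}`. -/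
def weakNorm (n : ℕ) (r : ℝ) (f : SiegelSpace n → ℂ) : ℝ≥0∞ :=
  ⨆ (lam : ℝ) (_ : 0 < lam), ENNReal.ofReal lam *
    volume {z | z ∈ siegelDomain n ∧ lam < ‖f z‖} ^ (1 / r)

/-- The affine self-map of `U` associated to the Heisenberg group element `[ζ, t]`:
`h(z', z_n) = (z' + ζ, z_n + t + 2i⟨z', ζ⟩ + i|ζ|²)`. -/
def heis (n : ℕ) (ζ : Fin (n - 1) → ℂ) (t : ℝ) (z : SiegelSpace n) : SiegelSpace n :=
  (z.1 + ζ,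
    z.2 + t + 2 * Complex.I * ∑ k, z.1 k * (starRingEnd ℂ) (ζ k)
      + Complex.I * ((∑ k, ‖ζ k‖ ^ 2 : ℝ) : ℂ))

/-!
Since `|Q_α(z,w)| > λ` forces `|ρ(z,w)| < λ^{-1/α}`, the weak-type bound reduces to the
distribution estimate `|{z ∈ U : |ρ(z,w)| < δ}| ≤ C δ^{n+1}` with `C = 2^{n+1} π^n / (n-1)!`.
Slice over `z'`: the identity `2 Re ρ(z,w) = ρ(z) + ρ(w) + |z' - w'|²` confines `z'` to the ball
`|z' - w'|² < 2δ`, of volume `(2πδ)^{n-1} / (n-1)!`, and for fixed `z'` the bounds `|Im ρ| < δ`,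
`0 < Im z_n - |z'|² < 2δ` confine `z_n` to a rectangle of area `8δ² ≤ 4πδ²`.
The bound in the second variable follows from `|ρ(z,w)| = |ρ(w,z)|`.
-/

open scoped ComplexConjugate Nat

section Rho

variable {n : ℕ}

lemma mem_siegelDomain_iff {z : SiegelSpace n} : z ∈ siegelDomain n ↔ 0 < siegelRhoSelf n z := by
  simp [siegelDomain, siegelRhoSelf]

lemma siegelRho_re (z w : SiegelSpace n) :
    (siegelRho n z w).re = (z.2.im + w.2.im) / 2 - ∑ k, (z.1 k * conj (w.1 k)).re := by
  simp [siegelRho, Complex.re_sum]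
  ring

lemma siegelRho_im (z w : SiegelSpace n) :
    (siegelRho n z w).im = (w.2.re - z.2.re) / 2 - ∑ k, (z.1 k * conj (w.1 k)).im := by
  simp [siegelRho, Complex.im_sum]
  ring

lemma two_mul_siegelRho_re (z w : SiegelSpace n) :
    2 * (siegelRho n z w).re =
      siegelRhoSelf n z + siegelRhoSelf n w + ∑ k, ‖z.1 k - w.1 k‖ ^ 2 := by
  simp only [siegelRho_re, siegelRhoSelf, Complex.sq_norm, Complex.normSq_sub,
    Finset.sum_add_distrib, Finset.sum_sub_distrib, ← Finset.mul_sum]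
  ring

lemma siegelRho_swap (z w : SiegelSpace n) : siegelRho n w z = conj (siegelRho n z w) := by
  simp only [siegelRho, map_sub, map_mul, map_sum, Complex.conj_conj, map_div₀,
    Complex.conj_I, map_ofNat]
  congr 1
  · ring
  · exact Finset.sum_congr rfl fun k _ => mul_comm _ _

lemma norm_siegelRho_swap (z w : SiegelSpace n) : ‖siegelRho n w z‖ = ‖siegelRho n z w‖ := by
  rw [siegelRho_swap, Complex.norm_conj]

end Rho

lemma volume_setOf_sum_norm_sub_sq_lt {ι : Type*} [Fintype ι] (c : ι → ℂ) {R : ℝ} (hR : 0 < R) :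
    volume {x : ι → ℂ | ∑ k, ‖x k - c k‖ ^ 2 < R}
      = ENNReal.ofReal ((π * R) ^ Fintype.card ι / (Fintype.card ι)!) := by
  have hball : {x : ι → ℂ | ∑ k, ‖x k - c k‖ ^ 2 < R}
      = (· + -c) ⁻¹' {y | (∑ k, ‖y k‖ ^ (2 : ℝ)) ^ (1 / 2 : ℝ) < √R} := by
    ext x
    simp only [Set.mem_ofPred_eq, Set.mem_preimage, ← sub_eq_add_neg, Pi.sub_apply, Real.rpow_two,
      ← Real.sqrt_eq_rpow]
    rw [Real.sqrt_lt_sqrt_iff (by positivity)]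
  rw [hball, measure_preimage_add_right]
  cases isEmpty_or_nonempty ι
  · simp [hR, volume_pi]
  rw [Complex.volume_sum_rpow_lt _ one_le_two, ← ENNReal.ofReal_pow (Real.sqrt_nonneg R), pow_mul,
    Real.sq_sqrt hR.le, ← ENNReal.ofReal_mul (by positivity)]
  congr 1
  norm_num [Real.Gamma_nat_eq_factorial]
  ring

lemma Complex.volume_reProdIm {s t : Set ℝ} (hs : MeasurableSet s) (ht : MeasurableSet t) :
    volume (s ×ℂ t) = volume s * volume t := by
  rw [← Complex.preimage_equivRealProd_prod]
  exact (Complex.volume_preserving_equiv_real_prod.measure_preimage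
    (hs.prod ht).nullMeasurableSet).trans (by rw [Measure.volume_eq_prod, Measure.prod_prod])

lemma MeasureTheory.Measure.prod_apply_le_of_slice_le {α β : Type*} [MeasurableSpace α]
    [MeasurableSpace β] {μ : Measure α} {ν : Measure β} [SFinite ν] {E : Set (α × β)}
    {B : Set α} {c : ℝ≥0∞} (hE : MeasurableSet E) (hEB : ∀ p ∈ E, p.1 ∈ B)
    (hc : ∀ x ∈ B, ν (Prod.mk x ⁻¹' E) ≤ c) : μ.prod ν E ≤ c * μ B := by
  have hslice : ∀ x, ν (Prod.mk x ⁻¹' E) ≤ B.indicator (fun _ => c) x := by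
    intro x
    by_cases hx : x ∈ B
    · simpa [hx] using hc x hx
    · have : Prod.mk x ⁻¹' E = ∅ :=
        Set.eq_empty_of_forall_notMem fun y hy => hx (hEB _ hy)
      simp [this]
  rw [Measure.prod_apply hE]
  exact (lintegral_mono hslice).trans (lintegral_indicator_const_le B c)

section Measure

variable {n : ℕ}

lemma sum_norm_sub_sq_lt_of_norm_siegelRho_lt {z w : SiegelSpace n} (hz : z ∈ siegelDomain n)
    (hw : w ∈ siegelDomain n) {δ : ℝ} (h : ‖siegelRho n z w‖ < δ) :
    ∑ k, ‖z.1 k - w.1 k‖ ^ 2 < 2 * δ := by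
  rw [mem_siegelDomain_iff] at hz hw
  linarith [two_mul_siegelRho_re z w, (Complex.re_le_norm (siegelRho n z w)).trans_lt h]

lemma snd_mem_reProdIm_of_norm_siegelRho_lt {z w : SiegelSpace n} (hz : z ∈ siegelDomain n)
    (hw : w ∈ siegelDomain n) {δ : ℝ} (h : ‖siegelRho n z w‖ < δ) :
    z.2 ∈ Set.Ioo (w.2.re - 2 * ∑ k, (z.1 k * conj (w.1 k)).im - 2 * δ)
        (w.2.re - 2 * ∑ k, (z.1 k * conj (w.1 k)).im + 2 * δ) ×ℂ
      Set.Ioo (∑ k, ‖z.1 k‖ ^ 2) (∑ k, ‖z.1 k‖ ^ 2 + 2 * δ) := by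
  have hre := (Complex.re_le_norm (siegelRho n z w)).trans_lt h
  have him := abs_lt.mp ((Complex.abs_im_le_norm (siegelRho n z w)).trans_lt h)
  rw [siegelRho_im] at him
  have hsum := two_mul_siegelRho_re z w
  rw [siegelRhoSelf, siegelRhoSelf] at hsum
  have hdist : 0 ≤ ∑ k, ‖z.1 k - w.1 k‖ ^ 2 := by positivity
  have hz' : ∑ k, ‖z.1 k‖ ^ 2 < z.2.im := hz
  have hw' : ∑ k, ‖w.1 k‖ ^ 2 < w.2.im := hw
  simp only [Complex.mem_reProdIm, Set.mem_Ioo]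
  refine ⟨⟨?_, ?_⟩, hz', ?_⟩ <;> linarith

theorem volume_norm_siegelRho_lt_le (hn : 0 < n) {w : SiegelSpace n} (hw : w ∈ siegelDomain n)
    {δ : ℝ} (hδ : 0 < δ) :
    volume {z | z ∈ siegelDomain n ∧ ‖siegelRho n z w‖ < δ}
      ≤ ENNReal.ofReal (2 ^ (n + 1) * π ^ n / (n - 1)! * δ ^ (n + 1)) := by
  set E := {z | z ∈ siegelDomain n ∧ ‖siegelRho n z w‖ < δ}
  have hE : MeasurableSet E := by
    refine MeasurableSet.inter (s₂ := {z | ‖siegelRho n z w‖ < δ})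
      (measurableSet_lt (by fun_prop) (by fun_prop)) (measurableSet_lt ?_ measurable_const)
    unfold siegelRho
    fun_prop
  have hslice (x : Fin (n - 1) → ℂ) : volume (Prod.mk x ⁻¹' E) ≤ ENNReal.ofReal (8 * δ ^ 2) :=
    calc volume (Prod.mk x ⁻¹' E)
        ≤ volume (Set.Ioo (w.2.re - 2 * ∑ k, (x k * conj (w.1 k)).im - 2 * δ)
              (w.2.re - 2 * ∑ k, (x k * conj (w.1 k)).im + 2 * δ) ×ℂ
            Set.Ioo (∑ k, ‖x k‖ ^ 2) (∑ k, ‖x k‖ ^ 2 + 2 * δ)) :=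
          measure_mono fun ζ hζ => snd_mem_reProdIm_of_norm_siegelRho_lt hζ.1 hw hζ.2
      _ = ENNReal.ofReal (8 * δ ^ 2) := by
          rw [Complex.volume_reProdIm measurableSet_Ioo measurableSet_Ioo, Real.volume_Ioo,
            Real.volume_Ioo, ← ENNReal.ofReal_mul (by linarith)]
          ring_nf
  have hvol : volume E ≤ ENNReal.ofReal (8 * δ ^ 2) *
      volume {x : Fin (n - 1) → ℂ | ∑ k, ‖x k - w.1 k‖ ^ 2 < 2 * δ} := by
    rw [Measure.volume_eq_prod]
    exact Measure.prod_apply_le_of_slice_le hE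
      (fun z hz => sum_norm_sub_sq_lt_of_norm_siegelRho_lt hz.1 hw hz.2) fun x _ => hslice x
  obtain ⟨m, rfl⟩ : ∃ m, n = m + 1 := ⟨n - 1, by omega⟩
  refine hvol.trans ?_
  rw [volume_setOf_sum_norm_sub_sq_lt _ (by positivity), Fintype.card_fin,
    ← ENNReal.ofReal_mul (by positivity)]
  refine ENNReal.ofReal_le_ofReal ?_
  simp only [Nat.add_sub_cancel]
  calc 8 * δ ^ 2 * ((π * (2 * δ)) ^ m / m !)
      = 8 * ((2 * π) ^ m * δ ^ (m + 2) / m !) := by ring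
    _ ≤ 4 * π * ((2 * π) ^ m * δ ^ (m + 2) / m !) := by gcongr; linarith [Real.pi_gt_three]
    _ = 2 ^ (m + 1 + 1) * π ^ (m + 1) / m ! * δ ^ (m + 1 + 1) := by ring

end Measure

lemma weakNorm_le_of_volume_norm_lt_le {n : ℕ} {N α K : ℝ} (hN : 0 < N) (hα : 0 < α)
    (hK : 0 ≤ K) {f g : SiegelSpace n → ℂ} (hfg : ∀ z ∈ siegelDomain n, ‖f z‖ ≤ ‖g z‖ ^ (-α))
    (hg : ∀ δ > 0, volume {z | z ∈ siegelDomain n ∧ ‖g z‖ < δ} ≤ ENNReal.ofReal (K * δ ^ N)) :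
    weakNorm n (N / α) f ≤ ENNReal.ofReal (K ^ (α / N)) := by
  refine iSup₂_le fun lam hlam => ?_
  have hexp : (-α)⁻¹ < 0 := inv_lt_zero.2 (neg_lt_zero.2 hα)
  set δ := lam ^ (-α)⁻¹
  have hsub : {z | z ∈ siegelDomain n ∧ lam < ‖f z‖} ⊆ {z | z ∈ siegelDomain n ∧ ‖g z‖ < δ} := by
    rintro z ⟨hz, hlt⟩
    have hpow : lam < ‖g z‖ ^ (-α) := hlt.trans_le (hfg z hz)
    -- `Real.rpow` has `0 ^ (-α) = 0`, so `g` cannot vanish here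
    have hg0 : 0 < ‖g z‖ := (norm_nonneg _).lt_of_ne fun h => by
      rw [← h, Real.zero_rpow (neg_ne_zero.2 hα.ne')] at hpow
      exact hpow.not_gt hlam
    refine ⟨hz, ?_⟩
    have := Real.rpow_lt_rpow_of_neg hlam hpow hexp
    rwa [Real.rpow_rpow_inv hg0.le (neg_ne_zero.2 hα.ne')] at this
  calc ENNReal.ofReal lam * volume {z | z ∈ siegelDomain n ∧ lam < ‖f z‖} ^ (1 / (N / α))
      ≤ ENNReal.ofReal lam * ENNReal.ofReal (K * δ ^ N) ^ (α / N) := by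
        rw [one_div_div]
        gcongr
        exact (measure_mono hsub).trans (hg δ (Real.rpow_pos_of_pos hlam _))
    _ = ENNReal.ofReal (K ^ (α / N)) := by
        rw [ENNReal.ofReal_rpow_of_nonneg (by positivity) (by positivity),
          ← ENNReal.ofReal_mul hlam.le, Real.mul_rpow hK (by positivity),
          ← Real.rpow_mul (by positivity), ← Real.rpow_mul hlam.le,
          show (-α)⁻¹ * (N * (α / N)) = -1 by field_simp, Real.rpow_neg_one]
        field_simp

theorem weakNorm_Qalpha_le_general (n : ℕ) (hn : 0 < n) (α : ℝ)
    (hα0 : 0 < α) :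
    (∀ w ∈ siegelDomain n,
      weakNorm n (((n : ℝ) + 1) / α) (fun z => siegelRho n z w ^ (-(α : ℂ)))
        ≤ ENNReal.ofReal
            ((2 ^ (n + 1) * π ^ n / (Nat.factorial (n - 1) : ℝ)) ^ (α / ((n : ℝ) + 1)))) ∧
    (∀ z ∈ siegelDomain n,
      weakNorm n (((n : ℝ) + 1) / α) (fun w => siegelRho n z w ^ (-(α : ℂ)))
        ≤ ENNReal.ofReal
            ((2 ^ (n + 1) * π ^ n / (Nat.factorial (n - 1) : ℝ)) ^ (α / ((n : ℝ) + 1)))) := by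
  have hnorm (z w : SiegelSpace n) : ‖siegelRho n z w ^ (-(α : ℂ))‖ = ‖siegelRho n z w‖ ^ (-α) := by
    rw [← Complex.ofReal_neg, Complex.norm_cpow_real]
  have hvol (w : SiegelSpace n) (hw : w ∈ siegelDomain n) (δ : ℝ) (hδ : 0 < δ) :
      volume {z | z ∈ siegelDomain n ∧ ‖siegelRho n z w‖ < δ}
        ≤ ENNReal.ofReal (2 ^ (n + 1) * π ^ n / (n - 1)! * δ ^ ((n : ℝ) + 1)) := by
    exact_mod_cast volume_norm_siegelRho_lt_le hn hw hδ
  have hN : (0 : ℝ) < n + 1 := by positivity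
  refine ⟨fun w hw => ?_, fun z hz => ?_⟩
  · exact weakNorm_le_of_volume_norm_lt_le hN hα0 (by positivity)
      (fun z _ => (hnorm z w).le) (hvol w hw)
  · exact weakNorm_le_of_volume_norm_lt_le hN hα0 (by positivity)
      (fun w _ => (hnorm z w).trans_le (by rw [norm_siegelRho_swap])) (hvol z hz)

/-- For `0 < α < n+1` and `Q_α(z,w) = ρ(z,w)^{−α}`, the weak-`L^{(n+1)/α}` norms of
`Q_α(·,w)` and `Q_α(z,·)` are bounded by `(2^{n+1} π^n / (n−1)!)^{α/(n+1)}`. -/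
theorem weakNorm_Qalpha_le (n : ℕ) (hn : 0 < n) (α : ℝ)
    (hα0 : 0 < α) (hα1 : α < (n : ℝ) + 1) :
    (∀ w ∈ siegelDomain n,
      weakNorm n (((n : ℝ) + 1) / α) (fun z => siegelRho n z w ^ (-(α : ℂ)))
        ≤ ENNReal.ofReal
            ((2 ^ (n + 1) * π ^ n / (Nat.factorial (n - 1) : ℝ)) ^ (α / ((n : ℝ) + 1)))) ∧
    (∀ z ∈ siegelDomain n,
      weakNorm n (((n : ℝ) + 1) / α) (fun w => siegelRho n z w ^ (-(α : ℂ)))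
        ≤ ENNReal.ofReal
            ((2 ^ (n + 1) * π ^ n / (Nat.factorial (n - 1) : ℝ)) ^ (α / ((n : ℝ) + 1)))) :=
  weakNorm_Qalpha_le_general n hn α hα0
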